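/- arXiv:1411.7346 — 2 statements merged into one kernel-verified Lean document; each statement's English description precedes it below -/
import Mathlib

section
/- Hitting Lemma (additive form): Let a₁,...,a_q be points in the interval [0, L]. For a point x ∈ [0, L] and j ≥ 1, let ℓ_j^x (resp. r_j^x) be the distance from x to the j-th point of {a₁,...,a_q} to its left (resp. right), and define q_x = min over j of min(ℓ_j^x/j, r_j^x/j). For c > 0, let S_c = {x ∈ [0,L] : q_x < c}. Then the Lebesgue measure of S_c is at most 2cq. -/
/-!
Let `N x` be the number of points `aᵢ ≤ x` and `h x = x - c N x`: a sawtooth of slope `1` dropping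
by `c` at each point. The window `(x - cj, x]` contains at least `j` points exactly when
`h (x - cj) ≥ h x`, so a point is good for the left condition as soon as it is a strict left record
of `h`. Since `h` grows at unit speed, it is `1`-Lipschitz on its strict left records, and by right
continuity every value in `(0, h L]` is attained at a record in `[0, L]`. Hence the good points have
measure at least `h L ≥ L - cq`, and the bad ones at most `cq`. Reflecting `x ↦ L - x` handles the
right condition.
-/

open MeasureTheory Set Filter Topology
open scoped Finset

section StrictLeftRecords

variable {h : ℝ → ℝ}

theorem lipschitzOnWith_one_setOf_strictLeftRecord (hh : ∀ x y, x ≤ y → h y - h x ≤ y - x) :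
    LipschitzOnWith 1 h {x | ∀ y < x, h y < h x} := by
  have key : ∀ x y, x ≤ y → (∀ z < y, h z < h y) → |h x - h y| ≤ |x - y| := by
    intro x y hxy hy
    have hmono : h x ≤ h y := hxy.eq_or_lt.elim (fun e => e ▸ le_rfl) fun hlt => (hy x hlt).le
    rw [abs_sub_comm, abs_of_nonneg (sub_nonneg.2 hmono), abs_sub_comm,
      abs_of_nonneg (sub_nonneg.2 hxy)]
    exact hh x y hxy
  refine LipschitzOnWith.of_dist_le_mul fun x hx y hy => ?_
  rw [NNReal.coe_one, one_mul, Real.dist_eq, Real.dist_eq]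
  rcases le_total x y with hxy | hyx
  · exact key x y hxy hy
  · rw [abs_sub_comm, abs_sub_comm x]
    exact key y x hyx hx

theorem Ioc_subset_image_strictLeftRecords (hh : ∀ x y, x ≤ y → h y - h x ≤ y - x)
    (hcont : ∀ x, ContinuousWithinAt h (Ici x) x) {l r u : ℝ} (hu : ∀ y < l, h y ≤ u) :
    Ioc u (h r) ⊆ h '' {x ∈ Icc l r | ∀ y < x, h y < h x} := by
  rintro v ⟨huv, hvr⟩
  set S := {x ∈ Icc l r | v ≤ h x}
  have hrS : r ∈ S := ⟨⟨not_lt.1 fun hrl => (hu r hrl).not_gt (huv.trans_le hvr), le_rfl⟩, hvr⟩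
  have hS : BddBelow S := ⟨l, fun x hx => hx.1.1⟩
  -- the first time `h` reaches `v` in `[l, r]`
  set x₀ := sInf S
  have below : ∀ y < x₀, h y < v := by
    intro y hy
    by_cases hyl : y < l
    · exact (hu y hyl).trans_lt huv
    · by_contra hvy
      exact hy.not_ge (csInf_le hS ⟨⟨not_lt.1 hyl, hy.le.trans (csInf_le hS hrS)⟩, not_lt.1 hvy⟩)
  have hv_le : v ≤ h x₀ := by
    by_contra! hlt
    obtain ⟨z, hzv, hzS⟩ := ((hcont x₀).eventually (gt_mem_nhds hlt)).and_frequently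
      ((isGLB_csInf ⟨r, hrS⟩ hS).frequently_mem ⟨r, hrS⟩) |>.exists
    exact hzv.not_ge hzS.2
  have hle_v : h x₀ ≤ v := by
    refine le_of_forall_pos_lt_add fun ε hε => ?_
    linarith [hh (x₀ - ε) x₀ (by linarith), below (x₀ - ε) (by linarith)]
  refine ⟨x₀, ⟨⟨le_csInf ⟨r, hrS⟩ fun x hx => hx.1.1, csInf_le hS hrS⟩, fun y hy => ?_⟩,
    le_antisymm hle_v hv_le⟩
  exact (below y hy).trans_le hv_le

theorem ofReal_sub_le_volume_strictLeftRecords (hh : ∀ x y, x ≤ y → h y - h x ≤ y - x)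
    (hcont : ∀ x, ContinuousWithinAt h (Ici x) x) {l r u : ℝ} (hu : ∀ y < l, h y ≤ u) :
    ENNReal.ofReal (h r - u) ≤ volume {x ∈ Icc l r | ∀ y < x, h y < h x} := by
  set G := {x ∈ Icc l r | ∀ y < x, h y < h x}
  have hlip : LipschitzOnWith 1 h G :=
    (lipschitzOnWith_one_setOf_strictLeftRecord hh).mono fun x hx => hx.2
  calc ENNReal.ofReal (h r - u) = volume (Ioc u (h r)) := Real.volume_Ioc.symm
    _ ≤ volume (h '' G) := measure_mono (Ioc_subset_image_strictLeftRecords hh hcont hu)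
    _ ≤ volume G := by
      simpa only [hausdorffMeasure_real, ENNReal.coe_one, ENNReal.one_rpow, one_mul] using
        hlip.hausdorffMeasure_image_le zero_le_one

end StrictLeftRecords

section Sawtooth

variable {ι : Type*} [Fintype ι] (a : ι → ℝ) (c : ℝ)

noncomputable def numLE (x : ℝ) : ℕ := #{i | a i ≤ x}

noncomputable def sawtooth (x : ℝ) : ℝ := x - c * numLE a x

theorem numLE_mono : Monotone (numLE a) := fun _ _ hxy =>
  Finset.card_le_card (Finset.monotone_filter_right _ fun _ _ hi => hi.trans hxy)

theorem numLE_le_card (x : ℝ) : numLE a x ≤ Fintype.card ι :=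
  Finset.card_filter_le _ _

theorem numLE_add_card_filter {s x : ℝ} (hsx : s ≤ x) :
    numLE a s + #{i | s < a i ∧ a i ≤ x} = numLE a x := by
  classical
  rw [numLE, numLE, ← Finset.card_union_of_disjoint
    (Finset.disjoint_filter.2 fun _ _ h1 h2 => h2.1.not_ge h1), ← Finset.filter_or]
  exact congrArg _ (Finset.filter_congr fun i _ =>
    ⟨fun hi => hi.elim (·.trans hsx) And.right, fun hi => (le_or_gt (a i) s).imp_right (⟨·, hi⟩)⟩)

variable {a c}

theorem sawtooth_sub_le (hc : 0 ≤ c) {x y : ℝ} (hxy : x ≤ y) :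
    sawtooth a c y - sawtooth a c x ≤ y - x := by
  have : (numLE a x : ℝ) ≤ numLE a y := Nat.cast_le.2 (numLE_mono a hxy)
  unfold sawtooth
  nlinarith

theorem sawtooth_le (hc : 0 ≤ c) (x : ℝ) : sawtooth a c x ≤ x :=
  sub_le_self _ (by positivity)

theorem sub_mul_card_le_sawtooth (hc : 0 ≤ c) (x : ℝ) :
    x - c * Fintype.card ι ≤ sawtooth a c x := by
  have : (numLE a x : ℝ) ≤ Fintype.card ι := Nat.cast_le.2 (numLE_le_card a x)
  unfold sawtooth
  nlinarith

theorem numLE_eventuallyEq_nhdsGE (x : ℝ) : numLE a =ᶠ[𝓝[≥] x] fun _ => numLE a x := by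
  have : ∀ᶠ z in 𝓝[≥] x, ∀ i, a i ≤ z ↔ a i ≤ x := by
    refine eventually_all.2 fun i => ?_
    rcases le_or_gt (a i) x with hi | hi
    · filter_upwards [self_mem_nhdsWithin] with z hz using iff_of_true (hi.trans hz) hi
    · filter_upwards [nhdsWithin_le_nhds (eventually_lt_nhds hi)] with z hz
      exact iff_of_false hz.not_ge hi.not_ge
  filter_upwards [this] with z hz
  exact congrArg Finset.card (Finset.filter_congr fun i _ => hz i)

theorem continuousWithinAt_sawtooth_Ici (x : ℝ) : ContinuousWithinAt (sawtooth a c) (Ici x) x :=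
  (continuous_sub_right (c * numLE a x)).continuousWithinAt.congr_of_eventuallyEq
    ((numLE_eventuallyEq_nhdsGE (a := a) x).mono fun z hz => by rw [sawtooth, hz]) rfl

theorem measurable_sawtooth : Measurable (sawtooth a c) :=
  measurable_id.sub (measurable_const.mul (Nat.mono_cast.comp (numLE_mono a)).measurable)

theorem le_card_filter_iff_sawtooth_le (hc : 0 < c) (j : ℕ) (x : ℝ) :
    j ≤ #{i | x - c * j < a i ∧ a i ≤ x} ↔ sawtooth a c x ≤ sawtooth a c (x - c * j) := by
  rw [sawtooth, sawtooth, ← numLE_add_card_filter a (s := x - c * j) (sub_le_self x (by positivity)),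
    Nat.cast_add, ← Nat.cast_le (α := ℝ), ← mul_le_mul_iff_of_pos_left hc]
  constructor <;> intro <;> linarith

end Sawtooth

section HitSets

variable {ι : Type*} [Fintype ι] (a : ι → ℝ) (c L : ℝ)

-- the `j`-th point to the left of `x` lies at distance `< c j`, i.e. `ℓ_j^x / j < c`
def leftHitSet : Set ℝ :=
  {x | x ∈ Icc 0 L ∧ ∃ j : ℕ, 1 ≤ j ∧ j ≤ #{i | x - c * j < a i ∧ a i ≤ x}}

def rightHitSet : Set ℝ :=
  {x | x ∈ Icc 0 L ∧ ∃ j : ℕ, 1 ≤ j ∧ j ≤ #{i | x ≤ a i ∧ a i < x + c * j}}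

variable {a c}

theorem measurableSet_leftHitSet (hc : 0 < c) : MeasurableSet (leftHitSet a c L) := by
  have hset : leftHitSet a c L = Icc 0 L ∩
      ⋃ (j : ℕ) (_ : 1 ≤ j), {x | sawtooth a c x ≤ sawtooth a c (x - c * j)} := by
    ext x
    simp only [leftHitSet, le_card_filter_iff_sawtooth_le hc, mem_inter_iff, mem_iUnion,
      mem_ofPred_eq, exists_prop]
  rw [hset]
  exact measurableSet_Icc.inter <| .iUnion fun j => .iUnion fun _ =>
    measurableSet_le measurable_sawtooth (measurable_sawtooth.comp (measurable_sub_const _))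

theorem disjoint_leftHitSet_setOf_strictLeftRecord (hc : 0 < c) :
    Disjoint (leftHitSet a c L) {x | ∀ y < x, sawtooth a c y < sawtooth a c x} :=
  disjoint_left.2 fun x ⟨_, j, hj, hcard⟩ hrec =>
    ((le_card_filter_iff_sawtooth_le hc j x).1 hcard).not_gt
      (hrec _ (sub_lt_self x (mul_pos hc (Nat.cast_pos.2 hj))))

theorem volume_leftHitSet_le (hc : 0 < c) :
    volume (leftHitSet a c L) ≤ ENNReal.ofReal (c * Fintype.card ι) := by
  set G := {x ∈ Icc 0 L | ∀ y < x, sawtooth a c y < sawtooth a c x}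
  have hG : ENNReal.ofReal (L - c * Fintype.card ι) ≤ volume G := by
    refine (ENNReal.ofReal_le_ofReal ?_).trans (ofReal_sub_le_volume_strictLeftRecords
      (fun x y => sawtooth_sub_le hc.le) continuousWithinAt_sawtooth_Ici
      fun y hy => (sawtooth_le hc.le y).trans hy.le)
    linarith [sub_mul_card_le_sawtooth (a := a) hc.le L]
  have hsum : volume G + volume (leftHitSet a c L) ≤ ENNReal.ofReal L := by
    rw [← measure_union ((disjoint_leftHitSet_setOf_strictLeftRecord L hc).mono_right
      fun x hx => hx.2).symm (measurableSet_leftHitSet L hc)]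
    calc volume (G ∪ leftHitSet a c L) ≤ volume (Icc 0 L) :=
          measure_mono (union_subset (fun x hx => hx.1) fun x hx => hx.1)
      _ = ENNReal.ofReal L := by rw [Real.volume_Icc, sub_zero]
  refine (ENNReal.add_le_add_iff_left (ENNReal.ofReal_ne_top (r := L - c * Fintype.card ι))).1 ?_
  calc ENNReal.ofReal (L - c * Fintype.card ι) + volume (leftHitSet a c L)
      ≤ ENNReal.ofReal L := (add_le_add_left hG _).trans hsum
    _ = ENNReal.ofReal (L - c * Fintype.card ι + c * Fintype.card ι) := by rw [sub_add_cancel]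
    _ ≤ _ := ENNReal.ofReal_add_le

theorem rightHitSet_eq_preimage :
    rightHitSet a c L = (L - ·) ⁻¹' leftHitSet (fun i => L - a i) c L := by
  have hcount : ∀ (x : ℝ) (j : ℕ), #{i | x ≤ a i ∧ a i < x + c * j} =
      #{i | L - x - c * j < L - a i ∧ L - a i ≤ L - x} := fun x j =>
    congrArg Finset.card <| Finset.filter_congr fun i _ => by
      constructor <;> rintro ⟨h₁, h₂⟩ <;> constructor <;> linarith
  ext x
  simp only [rightHitSet, leftHitSet, mem_preimage, mem_ofPred_eq, mem_Icc, hcount]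
  constructor <;> rintro ⟨⟨h₀, hL⟩, hj⟩ <;> exact ⟨⟨by linarith, by linarith⟩, hj⟩

theorem volume_rightHitSet_le (hc : 0 < c) :
    volume (rightHitSet a c L) ≤ ENNReal.ofReal (c * Fintype.card ι) := by
  rw [rightHitSet_eq_preimage, (Measure.measurePreserving_sub_left volume L).measure_preimage
    (measurableSet_leftHitSet L hc).nullMeasurableSet]
  exact volume_leftHitSet_le L hc

end HitSets

open Classical in
theorem hitting_lemma_general (q : ℕ) (L c : ℝ) (hc : 0 < c)
    (a : Fin q → ℝ) :
    MeasureTheory.volume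
        {x : ℝ | x ∈ Set.Icc 0 L ∧ ∃ j : ℕ, 1 ≤ j ∧
          (j ≤ (Finset.univ.filter (fun i => x - c * j < a i ∧ a i ≤ x)).card
            ∨ j ≤ (Finset.univ.filter (fun i => x ≤ a i ∧ a i < x + c * j)).card)}
      ≤ ENNReal.ofReal (2 * c * q) := by
  have hleft := volume_leftHitSet_le (a := a) L hc
  have hright := volume_rightHitSet_le (a := a) L hc
  rw [Fintype.card_fin] at hleft hright
  calc volume _ ≤ volume (leftHitSet a c L ∪ rightHitSet a c L) := by
        refine measure_mono ?_
        rintro x ⟨hx, j, hj, hj' | hj'⟩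
        exacts [Or.inl ⟨hx, j, hj, hj'⟩, Or.inr ⟨hx, j, hj, hj'⟩]
    _ ≤ ENNReal.ofReal (c * q) + ENNReal.ofReal (c * q) :=
        (measure_union_le _ _).trans (add_le_add hleft hright)
    _ = ENNReal.ofReal (2 * c * q) := by
        rw [← ENNReal.ofReal_add (by positivity) (by positivity), two_mul, add_mul]

open Classical in
/-- Hitting Lemma (additive form). Let `a₁,…,a_q ∈ [0,L]`. A point `x ∈ [0,L]`
is "hit" (`q_x < c`) if for some `j ≥ 1` the `j`-th point of `{aᵢ}` to its left
(resp. right) is at distance `< c·j`, i.e. at least `j` of the points lie in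
`(x - c·j, x]` (resp. `[x, x + c·j)`). The set `S_c` of hit points has Lebesgue
measure at most `2·c·q`. -/
theorem hitting_lemma (q : ℕ) (L c : ℝ) (hL : 0 ≤ L) (hc : 0 < c)
    (a : Fin q → ℝ) (ha : ∀ i, a i ∈ Set.Icc 0 L) :
    MeasureTheory.volume
        {x : ℝ | x ∈ Set.Icc 0 L ∧ ∃ j : ℕ, 1 ≤ j ∧
          (j ≤ (Finset.univ.filter (fun i => x - c * j < a i ∧ a i ≤ x)).card
            ∨ j ≤ (Finset.univ.filter (fun i => x ≤ a i ∧ a i < x + c * j)).card)}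
      ≤ ENNReal.ofReal (2 * c * q) :=
  hitting_lemma_general q L c hc a
end

section
/- Left-side Hitting Lemma: Let a₁ ≤ a₂ ≤ ... ≤ a_q be points in [0, L]. For x ∈ [0,L] and 1 ≤ j ≤ q, let ℓ_j^x denote the distance from x to the j-th point to its left among a₁,...,a_q (or +∞ if fewer than j points lie at or to the left of x). For c > 0, the set S_{c,ℓ} = {x : ∃ j, ℓ_j^x/j < c} has Lebesgue measure at most cq. -/
/-!
Feed the sorted points to a single server as jobs arriving at times `a₁ ≤ … ≤ a_q`, each needing
service time `c`. The server is busy on `q` intervals of length `c`, and every `x ∈ S_{c,ℓ}` lies in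
one of them: if the `j` points `a_{m+1}, …, a_{m+j}` lie in `(x - cj, x]`, the last of these jobs
cannot be finished before `a_{m+1} + cj > x`, whereas if the server were idle at `x`, every job that
arrived by `x` would already be done.
-/

open MeasureTheory Set Finset

/-- `departure b c k` is when a single server finishes the `k`-th job, the jobs arriving at times
`b 0, b 1, …` and each needing service time `c`; it starts the job at `departure b c k - c`. -/
def departure (b : ℕ → ℝ) (c : ℝ) : ℕ → ℝ
  | 0 => b 0 + c
  | k + 1 => max (b (k + 1)) (departure b c k) + c

namespace departure

variable (b : ℕ → ℝ) (c : ℝ)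

lemma arrival_add_le (k : ℕ) : b k + c ≤ departure b c k := by
  cases k with
  | zero => exact le_rfl
  | succ k => exact add_le_add_left (le_max_left _ _) c

lemma add_le_succ (k : ℕ) : departure b c k + c ≤ departure b c (k + 1) :=
  add_le_add_left (le_max_right _ _) c

lemma arrival_add_mul_le (i n : ℕ) : b i + c * (n + 1) ≤ departure b c (i + n) := by
  induction n with
  | zero => simpa using arrival_add_le b c i
  | succ n ih =>
    have := add_le_succ b c (i + n)
    rw [← add_assoc]
    push_cast
    linarith

lemma le_of_arrival_le_of_notMem {x : ℝ} (n : ℕ) (harr : ∀ k ≤ n, b k ≤ x)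
    (hidle : ∀ k ≤ n, x ∉ Ico (departure b c k - c) (departure b c k)) :
    departure b c n ≤ x := by
  have hstart : departure b c n - c ≤ x := by
    cases n with
    | zero => simpa [departure] using harr 0 le_rfl
    | succ n =>
      have ih := le_of_arrival_le_of_notMem n (fun k hk ↦ harr k (by omega))
        (fun k hk ↦ hidle k (by omega))
      simpa [departure] using ⟨harr (n + 1) le_rfl, ih⟩
  by_contra hlt
  exact hidle n le_rfl ⟨hstart, lt_of_not_ge hlt⟩

lemma volume_biUnion_busy_le (n : ℕ) :
    volume (⋃ k ∈ range n, Ico (departure b c k - c) (departure b c k)) ≤ ENNReal.ofReal (c * n) :=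
  calc volume (⋃ k ∈ range n, Ico (departure b c k - c) (departure b c k))
      ≤ ∑ k ∈ range n, volume (Ico (departure b c k - c) (departure b c k)) :=
        measure_biUnion_finset_le _ _
    _ = ENNReal.ofReal (c * n) := by
        simp [Real.volume_Ico, ENNReal.ofReal_mul' (Nat.cast_nonneg n), mul_comm]

end departure

lemma Monotone.exists_window_of_le_card_filter {α : Type*} [LinearOrder α] {q : ℕ}
    {a : Fin q → α} (ha : Monotone a) {l x : α} {j : ℕ} (hj : 1 ≤ j)
    (hcard : j ≤ #{i | l < a i ∧ a i ≤ x}) :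
    ∃ (m : ℕ) (hm : m + j ≤ q), l < a ⟨m, by omega⟩ ∧ ∀ i : Fin q, (i : ℕ) < m + j → a i ≤ x := by
  set s : Finset (Fin q) := {i | l < a i ∧ a i ≤ x}
  have hne : s.Nonempty := Finset.card_pos.mp (by omega)
  set M := s.max' hne
  have hM : a M ≤ x := (Finset.mem_filter.mp (s.max'_mem hne)).2.2
  have hjM : j ≤ M + 1 := by
    calc j ≤ #s := hcard
      _ ≤ #(Iic M) := card_le_card fun i hi ↦ Finset.mem_Iic.mpr (s.le_max' i hi)
      _ = M + 1 := Fin.card_Iic M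
  refine ⟨M + 1 - j, by omega, ?_, fun i hi ↦ (ha (Fin.le_def.mpr (by omega))).trans hM⟩
  by_contra! hle
  have : #s ≤ #(Ioc (⟨M + 1 - j, by omega⟩ : Fin q) M) := by
    refine card_le_card fun i hi ↦ Finset.mem_Ioc.mpr ⟨?_, s.le_max' i hi⟩
    by_contra! hi'
    exact absurd (Finset.mem_filter.mp hi).2.1 (not_lt.mpr ((ha hi').trans hle))
  rw [Fin.card_Ioc] at this
  change #s ≤ (M : ℕ) - (M + 1 - j) at this
  omega

open Classical in
theorem left_hitting_lemma_general (q : ℕ) (L c : ℝ)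
    (a : Fin q → ℝ) (hmono : Monotone a) :
    MeasureTheory.volume
        {x : ℝ | x ∈ Set.Icc 0 L ∧ ∃ j : ℕ, 1 ≤ j ∧
          j ≤ (Finset.univ.filter (fun i => x - c * j < a i ∧ a i ≤ x)).card}
      ≤ ENNReal.ofReal (c * q) := by
  set b : ℕ → ℝ := fun i ↦ if h : i < q then a ⟨i, h⟩ else 0
  refine le_trans (measure_mono ?_) (departure.volume_biUnion_busy_le b c q)
  rintro x ⟨-, j, hj, hcard⟩
  obtain ⟨m, hmq, hwindow, hbefore⟩ := hmono.exists_window_of_le_card_filter hj hcard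
  obtain ⟨n, rfl⟩ : ∃ n, j = n + 1 := ⟨j - 1, by omega⟩
  by_contra hx
  simp only [mem_iUnion, Finset.mem_range, not_exists] at hx
  have hserved := departure.le_of_arrival_le_of_notMem b c (m + n)
    (fun k hk ↦ by simpa [b, show k < q by omega] using hbefore ⟨k, by omega⟩ (by simp; omega))
    (fun k hk ↦ hx k (by omega))
  have hlate := departure.arrival_add_mul_le b c m n
  simp only [b, dif_pos (show m < q by omega)] at hlate
  push_cast at hwindow
  linarith

open Classical in
/-- Left-side Hitting Lemma. Let `a₁ ≤ … ≤ a_q` be points in `[0,L]`. The set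
`S_{c,ℓ}` of points `x` such that for some `j ≥ 1` the `j`-th point to the left
of `x` is at distance `< c·j` (equivalently, at least `j` of the points lie in
`(x - c·j, x]`) has Lebesgue measure at most `c·q`. -/
theorem left_hitting_lemma (q : ℕ) (L c : ℝ) (hL : 0 ≤ L) (hc : 0 < c)
    (a : Fin q → ℝ) (ha : ∀ i, a i ∈ Set.Icc 0 L) (hmono : Monotone a) :
    MeasureTheory.volume
        {x : ℝ | x ∈ Set.Icc 0 L ∧ ∃ j : ℕ, 1 ≤ j ∧
          j ≤ (Finset.univ.filter (fun i => x - c * j < a i ∧ a i ≤ x)).card}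
      ≤ ENNReal.ofReal (c * q) :=
  left_hitting_lemma_general q L c a hmono
end
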